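/- The group G_oo with presentation ⟨x, y | x y x y x⁻¹ y⁻¹ x y⁻¹ x⁻¹ y⁻¹⟩ and the group G_oe with presentation ⟨x, y | x y x y⁻¹ x⁻¹ y⁻¹ x y x⁻¹ y⁻¹⟩ are not isomorphic as groups. -/

import Mathlib

open FreeGroup

/-- The generator `x` of the free group on two generators. -/
def x : FreeGroup (Fin 2) := FreeGroup.of 0

/-- The generator `y` of the free group on two generators. -/
def y : FreeGroup (Fin 2) := FreeGroup.of 1

/-- The relator `r_oo`. -/
def r_oo : FreeGroup (Fin 2) := x * y * x * y * x⁻¹ * y⁻¹ * x * y⁻¹ * x⁻¹ * y⁻¹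

/-- The relator `r_oe`. -/
def r_oe : FreeGroup (Fin 2) := x * y * x * y⁻¹ * x⁻¹ * y⁻¹ * x * y * x⁻¹ * y⁻¹

/-- The group `G_oo` presented with the single relator `r_oo`. -/
def G_oo : Type := PresentedGroup ({r_oo} : Set (FreeGroup (Fin 2)))

/-- The group `G_oe` presented with the single relator `r_oe`. -/
def G_oe : Type := PresentedGroup ({r_oe} : Set (FreeGroup (Fin 2)))

noncomputable instance : Group G_oo := by unfold G_oo; infer_instance

noncomputable instance : Group G_oe := by unfold G_oe; infer_instance


/-!
The number of homomorphisms into a fixed finite group is an isomorphism invariant; we count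
homomorphisms into the Frobenius group `ℤ/7 ⋊ ℤ/3`. Both groups have abelianisation `ℤ`, so `x`
and `y` map to pairs `(a, s)`, `(b, s)` with the same rotation `s`, and by Fox calculus the relator
then holds iff `(a - b) · Δ(2 ^ s) = 0` in `ℤ/7`, where `Δ` is the Alexander polynomial (up to units
and `t ↦ t⁻¹`). Now `1 - t + 2t² - t³` vanishes at `4` in `ℤ/7`, while `2 - 2t + t²` vanishes at
none of `1, 2, 4`; hence `G_oo` has `7 + 7 + 49 = 63` such homomorphisms and `G_oe` only `21`.
-/

namespace PresentedGroup

variable {α G : Type*} [Group G]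

def homEquiv (rels : Set (FreeGroup α)) :
    (PresentedGroup rels →* G) ≃ {f : α → G // ∀ r ∈ rels, FreeGroup.lift f r = 1} where
  toFun φ := ⟨fun a ↦ φ (of a), fun r hr ↦ by
    rw [← FreeGroup.lift_unique (f := fun a ↦ φ (of a)) (φ.comp (mk rels)) fun _ ↦ rfl,
      MonoidHom.comp_apply, one_of_mem hr, φ.map_one]⟩
  invFun f := toGroup f.2
  left_inv φ := ext fun _ ↦ toGroup.of _
  right_inv f := Subtype.ext <| funext fun _ ↦ toGroup.of _

def homEquivSolutions (r : FreeGroup (Fin 2)) :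
    (PresentedGroup ({r} : Set (FreeGroup (Fin 2))) →* G) ≃
      {p : G × G // FreeGroup.lift ![p.1, p.2] r = 1} :=
  (homEquiv _).trans <|
    (Equiv.subtypeEquivRight (q := fun f ↦ FreeGroup.lift f r = 1) fun _ ↦ by simp).trans <|
    (piFinTwoEquiv fun _ ↦ G).subtypeEquiv fun f ↦
      Iff.of_eq <| congrArg (fun g ↦ FreeGroup.lift g r = 1) (FinVec.etaExpand_eq f).symm

end PresentedGroup

/-- The Frobenius group `ℤ/7 ⋊ ℤ/3`, with `i : ℤ/3` acting on `ℤ/7` as multiplication by `2 ^ i`. -/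
def Frob21 : Type := ZMod 7 × ZMod 3

namespace Frob21

instance : DecidableEq Frob21 := inferInstanceAs (DecidableEq (ZMod 7 × ZMod 3))
instance : Fintype Frob21 := inferInstanceAs (Fintype (ZMod 7 × ZMod 3))

instance : Mul Frob21 := ⟨fun a b ↦ (a.1 + 2 ^ a.2.val * b.1, a.2 + b.2)⟩
instance : One Frob21 := ⟨(0, 0)⟩
instance : Inv Frob21 := ⟨fun a ↦ (-(2 ^ (-a.2).val * a.1), -a.2)⟩

instance : Group Frob21 := Group.ofLeftAxioms (by decide) (by decide) (by decide)

end Frob21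

theorem lift_r_oo {G : Type*} [Group G] (a b : G) :
    FreeGroup.lift ![a, b] r_oo = a * b * a * b * a⁻¹ * b⁻¹ * a * b⁻¹ * a⁻¹ * b⁻¹ := by
  simp [r_oo, x, y]

theorem lift_r_oe {G : Type*} [Group G] (a b : G) :
    FreeGroup.lift ![a, b] r_oe = a * b * a * b⁻¹ * a⁻¹ * b⁻¹ * a * b * a⁻¹ * b⁻¹ := by
  simp [r_oe, x, y]

theorem card_monoidHom_G_oo_Frob21 : Nat.card (G_oo →* Frob21) = 63 := by
  refine (Nat.card_congr (PresentedGroup.homEquivSolutions r_oo)).trans ?_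
  simp only [lift_r_oo, Nat.card_eq_fintype_card]
  decide

theorem card_monoidHom_G_oe_Frob21 : Nat.card (G_oe →* Frob21) = 21 := by
  refine (Nat.card_congr (PresentedGroup.homEquivSolutions r_oe)).trans ?_
  simp only [lift_r_oe, Nat.card_eq_fintype_card]
  decide

theorem G_oo_not_iso_G_oe : ¬ Nonempty (G_oo ≃* G_oe) := by
  rintro ⟨e⟩
  have := Nat.card_congr (e.monoidHomCongrLeftEquiv (N := Frob21))
  rw [card_monoidHom_G_oo_Frob21, card_monoidHom_G_oe_Frob21] at this
  omega
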